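/- arXiv:2307.08442 — 2 statements merged into one kernel-verified Lean document; each statement's English description precedes it below -/
import Mathlib

section
/- Let G = (V, E, w) be a finite directed graph with edge weights in {−1, 0, +1}, and let u, v ∈ V. There exists a nonnegative prefix path from u to v in G if and only if there exist vertices u = x_0, x_1, …, x_k = v (k ≥ 0) such that for every 0 ≤ i < k, either (x_i, x_{i+1}) ∈ E with w(x_i, x_{i+1}) ≥ 0, or there exists a Dyck path from x_i to x_{i+1} in G. -/
/-- `IsWalk E u k`: the sequence `u 0, u 1, …, u k` is a walk in the directed
graph with edge relation `E`. -/
def IsWalk {V : Type*} (E : V → V → Prop) (u : ℕ → V) (k : ℕ) : Prop :=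
  ∀ i < k, E (u i) (u (i + 1))

/-- The total weight of the walk `u 0, …, u k`. -/
def walkWeight {V : Type*} (w : V → V → ℤ) (u : ℕ → V) (k : ℕ) : ℤ :=
  ∑ i ∈ Finset.range k, w (u i) (u (i + 1))

/-- `NonnegPrefix w u k`: every prefix sum of the walk `u 0, …, u k` is nonnegative. -/
def NonnegPrefix {V : Type*} (w : V → V → ℤ) (u : ℕ → V) (k : ℕ) : Prop :=
  ∀ i ≤ k, 0 ≤ walkWeight w u i

/-- There is a nonnegative prefix path from `s` to `t`. -/
def NNPPath {V : Type*} (E : V → V → Prop) (w : V → V → ℤ) (s t : V) : Prop :=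
  ∃ (u : ℕ → V) (k : ℕ), u 0 = s ∧ u k = t ∧ IsWalk E u k ∧ NonnegPrefix w u k

/-- A Dyck path from `s` to `t`: a nonnegative prefix path of total weight zero. -/
def DyckPath {V : Type*} (E : V → V → Prop) (w : V → V → ℤ) (s t : V) : Prop :=
  ∃ (u : ℕ → V) (k : ℕ), u 0 = s ∧ u k = t ∧ IsWalk E u k ∧ NonnegPrefix w u k ∧
    walkWeight w u k = 0

lemma walkWeight_zero {V : Type*} (w : V → V → ℤ) (u : ℕ → V) :
    walkWeight w u 0 = 0 := by simp [walkWeight]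

lemma walkWeight_succ {V : Type*} (w : V → V → ℤ) (u : ℕ → V) (k : ℕ) :
    walkWeight w u (k+1) = walkWeight w u k + w (u k) (u (k+1)) :=
  Finset.sum_range_succ _ _

lemma walkWeight_congr {V : Type*} (w : V → V → ℤ) {u u' : ℕ → V} {k : ℕ}
    (h : ∀ i ≤ k, u i = u' i) : walkWeight w u k = walkWeight w u' k := by
  unfold walkWeight
  refine Finset.sum_congr rfl ?_
  intro i hi
  rw [Finset.mem_range] at hi
  rw [h i (le_of_lt hi), h (i+1) hi]

lemma walkWeight_shift {V : Type*} (w : V → V → ℤ) (u : ℕ → V) (i t : ℕ) :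
    walkWeight w (fun m => u (i + m)) t = walkWeight w u (i + t) - walkWeight w u i := by
  induction t with
  | zero => simp [walkWeight]
  | succ t ih =>
      rw [walkWeight_succ, ih]
      have : i + (t + 1) = (i + t) + 1 := by omega
      rw [this, walkWeight_succ w u (i+t)]
      ring

lemma nnp_refl {V : Type*} (E : V → V → Prop) (w : V → V → ℤ) (a : V) :
    NNPPath E w a a := by
  refine ⟨fun _ => a, 0, rfl, rfl, ?_, ?_⟩
  · intro i hi; omega
  · intro i hi
    have : i = 0 := by omega
    simp [this, walkWeight_zero]

lemma nnp_single {V : Type*} {E : V → V → Prop} {w : V → V → ℤ} {a b : V}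
    (he : E a b) (hwab : 0 ≤ w a b) : NNPPath E w a b := by
  refine ⟨fun m => if m = 0 then a else b, 1, by simp, by simp, ?_, ?_⟩
  · intro i hi
    have : i = 0 := by omega
    simpa [this] using he
  · intro i hi
    interval_cases i
    · simp [walkWeight_zero]
    · simpa [walkWeight_succ, walkWeight_zero] using hwab

lemma nnp_trans {V : Type*} {E : V → V → Prop} {w : V → V → ℤ} {a b c : V}
    (h1 : NNPPath E w a b) (h2 : NNPPath E w b c) : NNPPath E w a c := by
  obtain ⟨u1, k1, hu10, hu1k, hw1, hn1⟩ := h1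
  obtain ⟨u2, k2, hu20, hu2k, hw2, hn2⟩ := h2
  set z : ℕ → V := fun m => if m < k1 then u1 m else u2 (m - k1) with hz
  have hz1 : ∀ i ≤ k1, z i = u1 i := by
    intro i hi
    rcases lt_or_eq_of_le hi with h | h
    · simp [hz, h]
    · subst h; simp [hz, hu20, hu1k]
  have hz2 : ∀ t, z (k1 + t) = u2 t := by
    intro t
    rcases Nat.eq_zero_or_pos t with h | h
    · subst h
      simp only [Nat.add_zero]
      rw [hz1 k1 le_rfl, hu1k, ← hu20]
    · have : ¬ (k1 + t < k1) := by omega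
      simp [hz, this]
  have hWpre : ∀ i ≤ k1, walkWeight w z i = walkWeight w u1 i := by
    intro i hi
    exact walkWeight_congr w (fun j hj => hz1 j (le_trans hj hi))
  have hWsuf : ∀ t, walkWeight w z (k1 + t) = walkWeight w u1 k1 + walkWeight w u2 t := by
    intro t
    induction t with
    | zero => simp [hWpre k1 le_rfl, walkWeight_zero]
    | succ t ih =>
        have h1 : k1 + (t + 1) = (k1 + t) + 1 := by omega
        rw [h1, walkWeight_succ, ih, walkWeight_succ w u2 t, hz2 t]
        have : z (k1 + t + 1) = u2 (t + 1) := by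
          have := hz2 (t + 1); rwa [← Nat.add_assoc] at this
        rw [this]; ring
  refine ⟨z, k1 + k2, by rw [hz1 0 (Nat.zero_le _), hu10], by rw [hz2 k2, hu2k], ?_, ?_⟩
  · intro i hi
    rcases lt_or_ge i k1 with h | h
    · rw [hz1 i (le_of_lt h), hz1 (i+1) h]
      exact hw1 i h
    · obtain ⟨t, rfl⟩ : ∃ t, i = k1 + t := ⟨i - k1, by omega⟩
      have ht : t < k2 := by omega
      have h2 : z (k1 + t + 1) = u2 (t + 1) := by
        have := hz2 (t + 1); rwa [← Nat.add_assoc] at this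
      rw [hz2 t, h2]
      exact hw2 t ht
  · intro i hi
    rcases le_or_gt i k1 with h | h
    · rw [hWpre i h]; exact hn1 i h
    · obtain ⟨t, rfl⟩ : ∃ t, i = k1 + t := ⟨i - k1, by omega⟩
      rw [hWsuf t]
      have := hn1 k1 le_rfl
      have := hn2 t (by omega)
      omega

/-- Auxiliary: chain of nonneg edges / Dyck paths. -/
def ChainRel {V : Type*} (E : V → V → Prop) (w : V → V → ℤ) (s t : V) : Prop :=
  ∃ (x : ℕ → V) (k : ℕ), x 0 = s ∧ x k = t ∧
    ∀ i < k, (E (x i) (x (i + 1)) ∧ 0 ≤ w (x i) (x (i + 1))) ∨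
      DyckPath E w (x i) (x (i + 1))

lemma chain_refl {V : Type*} (E : V → V → Prop) (w : V → V → ℤ) (a : V) :
    ChainRel E w a a := ⟨fun _ => a, 0, rfl, rfl, by intro i hi; omega⟩

lemma chain_snoc {V : Type*} {E : V → V → Prop} {w : V → V → ℤ} {a b c : V}
    (h : ChainRel E w a b)
    (hs : (E b c ∧ 0 ≤ w b c) ∨ DyckPath E w b c) : ChainRel E w a c := by
  obtain ⟨x, k, hx0, hxk, hst⟩ := h
  set x' : ℕ → V := fun m => if m ≤ k then x m else c with hx'
  have e1 : ∀ i ≤ k, x' i = x i := fun i hi => by simp [hx', hi]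
  refine ⟨x', k + 1, by rw [e1 0 (Nat.zero_le _)]; exact hx0, by simp [hx'], ?_⟩
  intro i hi
  rcases lt_or_ge i k with h | h
  · rw [e1 i (le_of_lt h), e1 (i+1) h]
    exact hst i h
  · have : i = k := by omega
    subst this
    rw [e1 i le_rfl, hxk]
    have : x' (i + 1) = c := by simp [hx']
    rw [this]
    exact hs

/-- Discrete IVT with maximal crossing point. -/
lemma exists_cross (f : ℕ → ℤ) (b : ℕ) (c : ℤ)
    (hstep : ∀ m < b, f (m+1) ≤ f m + 1)
    (h0 : f 0 ≤ c) (hb : c < f b) :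
    ∃ m < b, f m = c ∧ ∀ l, m < l → l ≤ b → c < f l := by
  have hbpos : 0 < b := by
    rcases Nat.eq_zero_or_pos b with h | h
    · subst h; omega
    · exact h
  set s : Finset ℕ := (Finset.range b).filter (fun m => f m ≤ c) with hs
  have h0s : 0 ∈ s := by simp [hs, hbpos, h0]
  have hne : s.Nonempty := ⟨0, h0s⟩
  set m := s.max' hne with hm
  have hms : m ∈ s := s.max'_mem hne
  have hmb : m < b := by
    have := hms; simp [hs] at this; exact this.1
  have hfm_le : f m ≤ c := by
    have := hms; simp [hs] at this; exact this.2
  have hgt : ∀ l, m < l → l ≤ b → c < f l := by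
    intro l hml hlb
    by_contra hcon
    push_neg at hcon
    rcases lt_or_eq_of_le hlb with h | h
    · have : l ∈ s := by simp [hs, h, hcon]
      have := s.le_max' l this
      omega
    · subst h; omega
  have hfm1 : c < f (m + 1) := hgt (m+1) (by omega) (by omega)
  have := hstep m hmb
  exact ⟨m, hmb, by omega, hgt⟩

/-- In a finite graph with weights in `{-1, 0, +1}`, there is a
nonnegative prefix path from `u` to `v` iff `v` can be reached from `u` by a sequence
of steps each of which is either an edge of nonnegative weight or a Dyck path. -/
theorem nnp_iff_chain_of_nonneg_edges_and_dyck {V : Type*} [Fintype V]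
    (E : V → V → Prop) (w : V → V → ℤ)
    (hw : ∀ a b, E a b → w a b = -1 ∨ w a b = 0 ∨ w a b = 1)
    (u v : V) :
    NNPPath E w u v ↔
      ∃ (x : ℕ → V) (k : ℕ), x 0 = u ∧ x k = v ∧
        ∀ i < k, (E (x i) (x (i + 1)) ∧ 0 ≤ w (x i) (x (i + 1))) ∨
          DyckPath E w (x i) (x (i + 1)) := by
  constructor
  · rintro ⟨p, k, hp0, hpk, hwalk, hpre⟩
    set f : ℕ → ℤ := fun m => walkWeight w p m with hf
    have main : ∀ j, j ≤ k → ChainRel E w (p 0) (p j) := by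
      intro j
      induction j using Nat.strong_induction_on with
      | _ j ih =>
        intro hj
        match j with
        | 0 => exact chain_refl E w (p 0)
        | Nat.succ j =>
          have hjk : j < k := hj
          have hedge : E (p j) (p (j+1)) := hwalk j hjk
          rcases hw _ _ hedge with hneg | hnn
          · -- w = -1 : find matching Dyck segment
            set c : ℤ := f (j + 1) with hc
            have hfsucc : ∀ m < k, f (m + 1) = f m + w (p m) (p (m+1)) :=
              fun m _ => walkWeight_succ w p m
            have hstep : ∀ m < j, f (m + 1) ≤ f m + 1 := by
              intro m hm
              have hmk : m < k := by omega
              rcases hw _ _ (hwalk m hmk) with h | h | h <;>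
                rw [hfsucc m hmk] <;> omega
            have hcnn : 0 ≤ c := hpre (j+1) hj
            have hf0 : f 0 = 0 := walkWeight_zero w p
            have hfj : f j = c + 1 := by
              have := hfsucc j hjk
              rw [hneg] at this
              omega
            obtain ⟨m, hmj, hfm, hgt⟩ := exists_cross f j c hstep (by omega) (by omega)
            have hdyck : DyckPath E w (p m) (p (j+1)) := by
              refine ⟨fun t => p (m + t), j + 1 - m, by simp, ?_, ?_, ?_, ?_⟩
              · have : m + (j + 1 - m) = j + 1 := by omega
                simp only [this]
              · intro t ht
                exact hwalk (m + t) (by omega)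
              · intro t ht
                rw [walkWeight_shift]
                have hft : c ≤ f (m + t) := by
                  rcases Nat.eq_zero_or_pos t with h0' | h0'
                  · subst h0'; simp [hfm]
                  · rcases le_or_gt (m + t) j with h | h
                    · exact le_of_lt (hgt (m+t) (by omega) h)
                    · have : m + t = j + 1 := by omega
                      rw [this]
                show 0 ≤ f (m + t) - f m
                rw [hfm]; omega
              · rw [walkWeight_shift]
                have : m + (j + 1 - m) = j + 1 := by omega
                rw [this]
                show f (j + 1) - f m = 0
                rw [hfm]; omega
            exact chain_snoc (ih m (by omega) (by omega)) (Or.inr hdyck)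
          · have : 0 ≤ w (p j) (p (j+1)) := by omega
            exact chain_snoc (ih j (by omega) (by omega)) (Or.inl ⟨hedge, this⟩)
    have := main k le_rfl
    rw [hp0, hpk] at this
    exact this
  · rintro ⟨x, k, hx0, hxk, hst⟩
    have main : ∀ j ≤ k, NNPPath E w u (x j) := by
      intro j hj
      induction j with
      | zero => rw [hx0]; exact nnp_refl E w u
      | succ j ih =>
          have h1 : NNPPath E w u (x j) := ih (by omega)
          have h2 : NNPPath E w (x j) (x (j+1)) := by
            rcases hst j (by omega) with ⟨he, hwe⟩ | ⟨q, l, hq0, hql, hqw, hqn, _⟩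
            · exact nnp_single he hwe
            · exact ⟨q, l, hq0, hql, hqw, hqn⟩
          exact nnp_trans h1 h2
    rw [← hxk]
    exact main k le_rfl
end

section
/- Let G = (V, E, w) be a finite directed graph with integer edge weights, let Z be the set of vertices v for which there exists an infinite walk from v with all prefix sums ≥ 0, and let v ∈ V. There exists an integer E ≥ 0 and an infinite walk u_0 = v, u_1, u_2, … with E + Σ_{j<i} w(u_j, u_{j+1}) ≥ 0 for all i ≥ 1, if and only if there exists a finite (possibly empty) walk from v to some vertex of Z. -/
/-- `ZSet E w` is the set of vertices `v` from which there is an infinite walk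
with all prefix sums nonnegative. -/
def ZSet {V : Type*} (E : V → V → Prop) (w : V → V → ℤ) : Set V :=
  {v | ∃ u : ℕ → V, u 0 = v ∧ (∀ i, E (u i) (u (i + 1))) ∧ ∀ i, 0 ≤ walkWeight w u i}

lemma walkWeight_add {V : Type*} (w : V → V → ℤ) (u : ℕ → V) (m i : ℕ) :
    walkWeight w u (m + i) = walkWeight w u m + walkWeight w (fun j => u (m + j)) i := by
  induction i with
  | zero => simp [walkWeight]
  | succ i ih =>
      have h1 : m + (i + 1) = (m + i) + 1 := rfl
      rw [h1]
      unfold walkWeight at *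
      rw [Finset.sum_range_succ, Finset.sum_range_succ, ih]
      simp only [h1]
      ring

/-- There is an integer `E ≥ 0` and an infinite walk from `v` with
`E` plus every prefix sum nonnegative, iff there is a finite (possibly empty) walk
from `v` to some vertex of `Z`. -/
theorem finite_energy_iff_reach_Z {V : Type*} [Fintype V]
    (E : V → V → Prop) (w : V → V → ℤ) (v : V) :
    (∃ En : ℤ, 0 ≤ En ∧ ∃ u : ℕ → V, u 0 = v ∧ (∀ i, E (u i) (u (i + 1))) ∧
        ∀ i, 0 ≤ En + walkWeight w u i) ↔
      ∃ (u : ℕ → V) (k : ℕ), u 0 = v ∧ IsWalk E u k ∧ u k ∈ ZSet E w := by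
  constructor
  · rintro ⟨En, hEn, u, hu0, hE, hpre⟩
    -- find m minimizing the prefix sums
    have hbdd : ∃ b : ℤ, ∀ x ∈ {x : ℤ | ∃ i, walkWeight w u i = x}, b ≤ x := by
      refine ⟨-En, ?_⟩
      rintro x ⟨i, rfl⟩
      have := hpre i; linarith
    obtain ⟨b, ⟨⟨m, hm⟩, hleast⟩⟩ :=
      Int.exists_least_of_bdd (P := fun x => ∃ i, walkWeight w u i = x)
        hbdd ⟨walkWeight w u 0, 0, rfl⟩
    have hmin : ∀ i, walkWeight w u m ≤ walkWeight w u i := by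
      intro i
      rw [hm]
      exact hleast _ ⟨i, rfl⟩
    refine ⟨u, m, hu0, fun i _ => hE i, ?_⟩
    refine ⟨fun j => u (m + j), rfl, fun i => hE (m + i), fun i => ?_⟩
    have := walkWeight_add w u m i
    have := hmin (m + i)
    linarith
  · rintro ⟨u1, k, hu0, hwalk, u2, hu2, hE2, hpre2⟩
    set c : ℕ → V := fun i => if i < k then u1 i else u2 (i - k) with hc
    have hck : ∀ i ≤ k, c i = u1 i := by
      intro i hi
      by_cases h : i < k
      · simp [hc, h]
      · have : i = k := by omega
        simp [hc, this, hu2]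
    have hctail : ∀ j, c (k + j) = u2 j := by
      intro j
      have h : ¬ (k + j < k) := by omega
      simp [hc, h, Nat.add_sub_cancel_left]
    have hEc : ∀ i, E (c i) (c (i + 1)) := by
      intro i
      by_cases h : i < k
      · rw [hck i (le_of_lt h), hck (i + 1) h]
        exact hwalk i h
      · have e1 : c i = u2 (i - k) := by
          have := hctail (i - k); rwa [show k + (i - k) = i by omega] at this
        have e2 : c (i + 1) = u2 (i - k + 1) := by
          have := hctail (i - k + 1); rwa [show k + (i - k + 1) = i + 1 by omega] at this
        rw [e1, e2]
        exact hE2 _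
    have hwc : ∀ i ≤ k, walkWeight w c i = walkWeight w u1 i := by
      intro i hi
      unfold walkWeight
      refine Finset.sum_congr rfl fun j hj => ?_
      simp only [Finset.mem_range] at hj
      rw [hck j (by omega), hck (j + 1) (by omega)]
    refine ⟨∑ i ∈ Finset.range k, |w (u1 i) (u1 (i + 1))|,
      Finset.sum_nonneg fun i _ => abs_nonneg _, c, ?_, hEc, ?_⟩
    · rcases Nat.eq_zero_or_pos k with h | h
      · subst h
        simp [hc, hu2, hu0]  -- c 0 = u2 0 = u1 0 = v
      · rw [hck 0 (by omega), hu0]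
    · intro i
      set B : ℤ := ∑ i ∈ Finset.range k, |w (u1 i) (u1 (i + 1))| with hB
      have hbound : ∀ j ≤ k, -B ≤ walkWeight w u1 j := by
        intro j hj
        have h1 : |walkWeight w u1 j| ≤ ∑ i ∈ Finset.range j, |w (u1 i) (u1 (i + 1))| :=
          Finset.abs_sum_le_sum_abs _ _
        have h2 : ∑ i ∈ Finset.range j, |w (u1 i) (u1 (i + 1))| ≤ B := by
          rw [hB]
          exact Finset.sum_le_sum_of_subset_of_nonneg
            (Finset.range_subset_range.2 hj) (fun i _ _ => abs_nonneg _)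
        have := abs_le.1 (h1.trans h2)
        linarith [this.1]
      by_cases h : i ≤ k
      · rw [hwc i h]
        linarith [hbound i h]
      · have h1 : i = k + (i - k) := by omega
        rw [h1, walkWeight_add, hwc k le_rfl]
        have htl : walkWeight w (fun j => c (k + j)) (i - k) = walkWeight w u2 (i - k) := by
          unfold walkWeight
          exact Finset.sum_congr rfl fun j _ => by simp only [hctail]
        rw [htl]
        have := hpre2 (i - k)
        have := hbound k le_rfl
        linarith
end
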